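/- arXiv:math-ph/0202038 — 2 statements merged into one kernel-verified Lean document; each statement's English description precedes it below -/
import Mathlib

section
/- Let M be a von Neumann algebra, let ν, ρ be positive linear forms on M, and suppose x ∈ Min_M(ν,ρ). Then Min_M(ν,ρ) = { x + k : k ∈ I_ν } ∩ { z ∈ M : z positive invertible }, where I_ν = { k ∈ M : ν(k*k) = 0 } is the left kernel ideal of ν. That is, a positive invertible z ∈ M belongs to Min_M(ν,ρ) if and only if ν((z−x)*(z−x)) = 0. -/
open scoped ComplexOrder

noncomputable section

variable {H : Type*} [NormedAddCommGroup H] [InnerProductSpace ℂ H] [CompleteSpace H]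

/-- A von Neumann algebra is closed under scalar multiplication by complex numbers. -/
instance VonNeumannAlgebra.instSMulMemClass :
    SMulMemClass (VonNeumannAlgebra H) ℂ (H →L[ℂ] H) where
  smul_mem {s} c x hx := s.toStarSubalgebra.smul_mem hx c

private lemma isClosed_centralizer' {A : Type*} [NormedRing A] (s : Set A) :
    IsClosed (Set.centralizer s) := by
  have h : Set.centralizer s = ⋂ a ∈ s, {x : A | a * x = x * a} := by
    ext x; rw [Set.mem_centralizer_iff]; simp
  rw [h]
  exact isClosed_biInter fun a _ =>
    isClosed_eq (continuous_const.mul continuous_id) (continuous_id.mul continuous_const)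

/-- A von Neumann algebra is norm-closed in `B(H)`; consequently the subtype `↥M`
inherits a C*-algebra structure. -/
instance VonNeumannAlgebra.instIsClosed (M : VonNeumannAlgebra H) :
    IsClosed (M : Set (H →L[ℂ] H)) :=
  M.centralizer_centralizer ▸ isClosed_centralizer' _

variable {M : VonNeumannAlgebra H}

/-- `ν` is a positive linear form on the von Neumann algebra `M`:
a bounded linear functional with `ν(x*x) ≥ 0` for all `x`. -/
def IsPosForm (ν : M →L[ℂ] ℂ) : Prop := ∀ x : M, 0 ≤ ν (star x * x)

/-- The set `Γ_M(ν,ρ) = { f ∈ M* : |f(y*x)|² ≤ ν(y*y)·ρ(x*x) for all x, y ∈ M }`. -/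
def GammaSet (ν ρ : M →L[ℂ] ℂ) : Set (M →L[ℂ] ℂ) :=
  {f | ∀ x y : M, ‖f (star y * x)‖ ^ 2 ≤ (ν (star y * y)).re * (ρ (star x * x)).re}

/-- `Min_M(ν,ρ)`: the set of positive invertible elements of `M` at which the function
`z ↦ (1/2)(ν(z) + ρ(z⁻¹))` attains its infimum over all positive invertible `z ∈ M`. -/
def MinSet (ν ρ : M →L[ℂ] ℂ) : Set M :=
  {x | (∃ w : M, x = star w * w) ∧ IsUnit x ∧
    (1/2) * ((ν x).re + (ρ (Ring.inverse x)).re) =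
      sInf {r : ℝ | ∃ z : M, (∃ w : M, z = star w * w) ∧ IsUnit z ∧
        r = (1/2) * ((ν z).re + (ρ (Ring.inverse z)).re)}}

/-!
At a minimizer `x` the derivative of `z ↦ (1/2)(ν(z) + ρ(z⁻¹))` along every self-adjoint direction
vanishes; since `d(z⁻¹) = -x⁻¹ (dz) x⁻¹`, this is the first-order condition
`ν(b) = ρ(x⁻¹ b x⁻¹)` for all `b`.

If `z` is a second minimizer, the first-order conditions at `x` and at `z` give
`ρ(c z c) = -ρ(c x c)` for `c = x⁻¹ - z⁻¹`. Both sides are nonnegative, so `ρ(c z c) = 0`.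
Writing `z = w* w`, the element `w c` lies in the left kernel of `ρ`, which is a left ideal by
Cauchy–Schwarz; since `x⁻¹ (z - x) = c z`, the first-order condition at `x` gives
`ν((z - x)²) = ρ(c z z c) = 0`.

Conversely, if `ν(k* k) = 0` then `ν(k) = 0` and, by the resolvent identity
`(x + k)⁻¹ = x⁻¹ - x⁻¹ (x (x + k)⁻¹ k) x⁻¹` and the first-order condition,
`ρ((x + k)⁻¹) = ρ(x⁻¹)`, so `x + k` attains the same value as `x`.
-/

open Ring Filter Topology
open scoped ComplexStarModule

theorem Ring.inverse_algebraMap {𝕜 R : Type*} [Field 𝕜] [Semiring R] [Algebra 𝕜 R] (c : 𝕜) :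
    (algebraMap 𝕜 R c)⁻¹ʳ = algebraMap 𝕜 R c⁻¹ := by
  rcases eq_or_ne c 0 with rfl | hc
  · simp
  have hu : IsUnit (algebraMap 𝕜 R c) := (IsUnit.mk0 c hc).map _
  simpa using (Ring.inverse_mul_eq_iff_eq_mul _ 1 _ hu).mpr
    (by rw [← map_mul, mul_inv_cancel₀ hc, map_one])

theorem hasDerivAt_ringInverse_add_smul {𝕜 R : Type*} [NontriviallyNormedField 𝕜] [NormedRing R]
    [NormedAlgebra 𝕜 R] [HasSummableGeomSeries R] {x : R} (hx : IsUnit x) (a : R) :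
    HasDerivAt (fun t : 𝕜 => (x + t • a)⁻¹ʳ) (-(x⁻¹ʳ * a * x⁻¹ʳ)) 0 := by
  obtain ⟨u, rfl⟩ := hx
  have hline : HasDerivAt (fun t : 𝕜 => ↑u + t • a) a 0 := by
    simpa using ((hasDerivAt_id (0 : 𝕜)).smul_const a).const_add (u : R)
  rw [Ring.inverse_unit]
  exact (hasFDerivAt_ringInverse (𝕜 := 𝕜) u).comp_hasDerivAt_of_eq 0 hline (by simp)

section CStarAlgebra

variable {A : Type*} [CStarAlgebra A] [PartialOrder A] [StarOrderedRing A]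

namespace PositiveLinearMap

def ofNonnegStarMulSelf (f : A →ₗ[ℂ] ℂ) (hf : ∀ a, 0 ≤ f (star a * a)) : A →ₚ[ℂ] ℂ :=
  .mk₀ f fun a ha => by
    obtain ⟨b, rfl⟩ := CStarAlgebra.nonneg_iff_eq_star_mul_self.mp ha
    exact hf b

/-- Cauchy–Schwarz for the semi-inner product `(a, b) ↦ f (star a * b)` of the GNS construction. -/
theorem apply_mul_eq_zero_of_apply_star_mul_self_eq_zero (f : A →ₚ[ℂ] ℂ) {k : A}
    (hk : f (star k * k) = 0) (b : A) : f (b * k) = 0 := by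
  have h := norm_inner_le_norm (𝕜 := ℂ) (f.toPreGNS (star b)) (f.toPreGNS k)
  rw [preGNS_inner_def, preGNS_norm_def f (f.toPreGNS k)] at h
  simpa [hk] using h

theorem hasDerivAt_re_comp (f : A →ₚ[ℂ] ℂ) {g : ℝ → A} {g' : A} {t : ℝ}
    (hg : HasDerivAt g g' t) : HasDerivAt (fun s => (f (g s)).re) (f g').re t :=
  let L : A →L[ℝ] ℂ := ⟨(f : A →ₗ[ℂ] ℂ).restrictScalars ℝ, map_continuous f⟩
  (Complex.reCLM.comp L).hasFDerivAt.comp_hasDerivAt t hg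

end PositiveLinearMap

theorem isStrictlyPositive_iff_exists_eq_star_mul_self {z : A} :
    IsStrictlyPositive z ↔ (∃ w, z = star w * w) ∧ IsUnit z := by
  rw [IsStrictlyPositive, CStarAlgebra.nonneg_iff_eq_star_mul_self]

theorem IsStrictlyPositive.exists_algebraMap_le {x : A} (hx : IsStrictlyPositive x) :
    ∃ δ : ℝ, 0 < δ ∧ algebraMap ℝ A δ ≤ x := by
  have hp : IsStrictlyPositive x⁻¹ʳ := isStrictlyPositive_ringInverse_iff.mpr hx
  have hc : 0 < ‖x⁻¹ʳ‖ + 1 := by positivity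
  have hle : x⁻¹ʳ ≤ algebraMap ℝ A (‖x⁻¹ʳ‖ + 1) :=
    hp.isSelfAdjoint.le_algebraMap_norm_self.trans (algebraMap_mono A (by linarith))
  refine ⟨(‖x⁻¹ʳ‖ + 1)⁻¹, inv_pos.mpr hc, ?_⟩
  have := CStarAlgebra.ringInverse_le_ringInverse hle hp
  rwa [Ring.inverse_inverse hx.isUnit, Ring.inverse_algebraMap] at this

theorem IsStrictlyPositive.eventually_add_smul {x a : A} (hx : IsStrictlyPositive x)
    (ha : IsSelfAdjoint a) : ∀ᶠ t in 𝓝 (0 : ℝ), IsStrictlyPositive (x + t • a) := by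
  obtain ⟨δ, hδ, hδx⟩ := hx.exists_algebraMap_le
  have hsmall : ∀ᶠ t in 𝓝 (0 : ℝ), ‖t • a‖ < δ / 2 := by
    have : Tendsto (fun t : ℝ => ‖t • a‖) (𝓝 0) (𝓝 0) := by
      simpa using ((continuous_id.smul (continuous_const (y := a))).norm).tendsto (0 : ℝ)
    exact this.eventually (gt_mem_nhds (half_pos hδ))
  filter_upwards [hsmall] with t ht
  refine (isStrictlyPositive_algebraMap (half_pos hδ)).of_le ?_
  calc algebraMap ℝ A (δ / 2) = algebraMap ℝ A δ + -algebraMap ℝ A (δ / 2) := by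
        rw [← map_neg, ← map_add]; ring_nf
    _ ≤ x + t • a := add_le_add hδx <| (neg_le_neg (algebraMap_mono A ht.le)).trans
        ((IsSelfAdjoint.all t).smul ha).neg_algebraMap_norm_le_self

def minObjective (ν ρ : A →ₚ[ℂ] ℂ) (z : A) : ℝ :=
  (1 / 2) * ((ν z).re + (ρ z⁻¹ʳ).re)

/-- `Min(ν, ρ)`, with "positive invertible" expressed as `IsStrictlyPositive`. -/
def minimizerSet (ν ρ : A →ₚ[ℂ] ℂ) : Set A :=
  {x | IsStrictlyPositive x ∧ IsMinOn (minObjective ν ρ) {z | IsStrictlyPositive z} x}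

variable {ν ρ : A →ₚ[ℂ] ℂ} {x z : A}

theorem minObjective_nonneg (hz : IsStrictlyPositive z) : 0 ≤ minObjective ν ρ z := by
  have hν := Complex.nonneg_iff.mp (ν.map_nonneg hz.nonneg)
  have hρ := Complex.nonneg_iff.mp
    (ρ.map_nonneg (isStrictlyPositive_ringInverse_iff.mpr hz).nonneg)
  unfold minObjective
  linarith [hν.1, hρ.1]

theorem setOf_minObjective_eq_sInf :
    {x | (∃ w, x = star w * w) ∧ IsUnit x ∧ minObjective ν ρ x =
      sInf {r | ∃ z : A, (∃ w, z = star w * w) ∧ IsUnit z ∧ r = minObjective ν ρ z}} =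
    minimizerSet ν ρ := by
  have hS : {r | ∃ z : A, (∃ w, z = star w * w) ∧ IsUnit z ∧ r = minObjective ν ρ z} =
      minObjective ν ρ '' {z | IsStrictlyPositive z} := by
    ext r
    simp [isStrictlyPositive_iff_exists_eq_star_mul_self, eq_comm, and_assoc]
  ext x
  rw [hS]
  simp only [minimizerSet, Set.mem_ofPred_eq, ← and_assoc,
    ← isStrictlyPositive_iff_exists_eq_star_mul_self]
  refine and_congr_right fun hx => ⟨fun h => isMinOn_iff.mpr fun u hu => ?_, fun h => ?_⟩
  · have hbdd : BddBelow (minObjective ν ρ '' {z | IsStrictlyPositive z}) :=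
      ⟨0, by rintro _ ⟨u, hu, rfl⟩; exact minObjective_nonneg hu⟩
    exact h ▸ csInf_le hbdd (Set.mem_image_of_mem _ hu)
  · refine (IsLeast.csInf_eq ?_).symm
    refine ⟨⟨x, hx, rfl⟩, ?_⟩
    rintro _ ⟨u, hu, rfl⟩
    exact isMinOn_iff.mp h u hu

theorem hasDerivAt_minObjective_add_smul (hx : IsUnit x) (a : A) :
    HasDerivAt (fun t : ℝ => minObjective ν ρ (x + t • a))
      ((1 / 2) * ((ν a).re - (ρ (x⁻¹ʳ * a * x⁻¹ʳ)).re)) 0 := by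
  have hline : HasDerivAt (fun t : ℝ => x + t • a) a 0 := by
    simpa using ((hasDerivAt_id (0 : ℝ)).smul_const a).const_add x
  have := ((ν.hasDerivAt_re_comp hline).add
    (ρ.hasDerivAt_re_comp (hasDerivAt_ringInverse_add_smul hx a))).const_mul (1 / 2)
  simpa [minObjective, sub_eq_add_neg] using this

theorem re_apply_eq_of_mem_minimizerSet (hx : x ∈ minimizerSet ν ρ) {a : A}
    (ha : IsSelfAdjoint a) : (ν a).re = (ρ (x⁻¹ʳ * a * x⁻¹ʳ)).re := by
  have hmin : IsLocalMin (fun t : ℝ => minObjective ν ρ (x + t • a)) 0 := by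
    filter_upwards [hx.1.eventually_add_smul ha] with t ht
    simpa using isMinOn_iff.mp hx.2 _ ht
  have := hmin.hasDerivAt_eq_zero (hasDerivAt_minObjective_add_smul hx.1.isUnit a)
  linarith

theorem apply_eq_apply_conj_of_mem_minimizerSet (hx : x ∈ minimizerSet ν ρ) (b : A) :
    ν b = ρ (x⁻¹ʳ * b * x⁻¹ʳ) := by
  have hp : IsSelfAdjoint x⁻¹ʳ := (isStrictlyPositive_ringInverse_iff.mpr hx.1).isSelfAdjoint
  -- both sides are hermitian in `b`, so agreeing in real part on self-adjoints suffices
  have hsa : ∀ a, IsSelfAdjoint a → ν a = ρ (x⁻¹ʳ * a * x⁻¹ʳ) := fun a ha => by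
    have hpap : IsSelfAdjoint (x⁻¹ʳ * a * x⁻¹ʳ) := by simpa [hp.star_eq] using ha.conjugate x⁻¹ʳ
    refine Complex.ext (re_apply_eq_of_mem_minimizerSet hx ha) ?_
    rw [Complex.conj_eq_iff_im.mp (ha.map ν), Complex.conj_eq_iff_im.mp (hpap.map ρ)]
  rw [← realPart_add_I_smul_imaginaryPart b]
  simp only [mul_add, add_mul, mul_smul_comm, smul_mul_assoc, map_add, map_smul,
    hsa _ (ℜ b).2, hsa _ (ℑ b).2]

theorem minObjective_add_eq_of_mem_minimizerSet (hx : x ∈ minimizerSet ν ρ) {k : A}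
    (hk : ν (star k * k) = 0) (hxk : IsStrictlyPositive (x + k)) :
    minObjective ν ρ (x + k) = minObjective ν ρ x := by
  have hνk : ν k = 0 := by simpa using ν.apply_mul_eq_zero_of_apply_star_mul_self_eq_zero hk 1
  suffices hρq : ρ (x + k)⁻¹ʳ = ρ x⁻¹ʳ by simp [minObjective, hνk, hρq]
  set p := x⁻¹ʳ
  set q := (x + k)⁻¹ʳ
  have hqp : q = p - p * (x * q * k) * p := by
    have h1 : q * (x + k) = 1 := Ring.inverse_mul_cancel _ hxk.isUnit
    have h2 : p * x = 1 := Ring.inverse_mul_cancel _ hx.1.isUnit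
    have h3 : x * p = 1 := Ring.mul_inverse_cancel _ hx.1.isUnit
    calc q = q * (x * p) := by rw [h3, mul_one]
      _ = q * (x + k) * p - (p * x) * q * k * p := by rw [h2]; noncomm_ring
      _ = p - p * (x * q * k) * p := by rw [h1, one_mul]; noncomm_ring
  rw [hqp, map_sub, ← apply_eq_apply_conj_of_mem_minimizerSet hx,
    ν.apply_mul_eq_zero_of_apply_star_mul_self_eq_zero hk, sub_zero]

theorem apply_conj_sub_eq_of_mem_minimizerSet (hx : x ∈ minimizerSet ν ρ)
    (hz : z ∈ minimizerSet ν ρ) :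
    ρ ((x⁻¹ʳ - z⁻¹ʳ) * z * (x⁻¹ʳ - z⁻¹ʳ)) = 2 * (ρ z⁻¹ʳ - ρ x⁻¹ʳ) := by
  have hzq : z * z⁻¹ʳ = 1 := Ring.mul_inverse_cancel _ hz.1.isUnit
  have hqz : z⁻¹ʳ * z = 1 := Ring.inverse_mul_cancel _ hz.1.isUnit
  have hpzp : ρ (x⁻¹ʳ * z * x⁻¹ʳ) = ρ z⁻¹ʳ := by
    rw [← apply_eq_apply_conj_of_mem_minimizerSet hx, apply_eq_apply_conj_of_mem_minimizerSet hz,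
      hqz, one_mul]
  have hid : (x⁻¹ʳ - z⁻¹ʳ) * z * (x⁻¹ʳ - z⁻¹ʳ) = x⁻¹ʳ * z * x⁻¹ʳ - x⁻¹ʳ - x⁻¹ʳ + z⁻¹ʳ := by
    calc _ = x⁻¹ʳ * z * x⁻¹ʳ - x⁻¹ʳ * (z * z⁻¹ʳ) - (z⁻¹ʳ * z) * x⁻¹ʳ + (z⁻¹ʳ * z) * z⁻¹ʳ := by
          noncomm_ring
      _ = _ := by rw [hzq, hqz]; noncomm_ring
  rw [hid, map_add, map_sub, map_sub, hpzp]
  ring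

theorem apply_conj_sub_eq_zero_of_mem_minimizerSet (hx : x ∈ minimizerSet ν ρ)
    (hz : z ∈ minimizerSet ν ρ) : ρ ((x⁻¹ʳ - z⁻¹ʳ) * z * (x⁻¹ʳ - z⁻¹ʳ)) = 0 := by
  have hcz := apply_conj_sub_eq_of_mem_minimizerSet hx hz
  have hcx := apply_conj_sub_eq_of_mem_minimizerSet hz hx
  rw [show (z⁻¹ʳ - x⁻¹ʳ) * x * (z⁻¹ʳ - x⁻¹ʳ) = (x⁻¹ʳ - z⁻¹ʳ) * x * (x⁻¹ʳ - z⁻¹ʳ) by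
    noncomm_ring] at hcx
  have hc : IsSelfAdjoint (x⁻¹ʳ - z⁻¹ʳ) :=
    (isStrictlyPositive_ringInverse_iff.mpr hx.1).isSelfAdjoint.sub
      (isStrictlyPositive_ringInverse_iff.mpr hz.1).isSelfAdjoint
  have conj_nonneg : ∀ y, 0 ≤ y → 0 ≤ ρ ((x⁻¹ʳ - z⁻¹ʳ) * y * (x⁻¹ʳ - z⁻¹ʳ)) := fun y hy =>
    ρ.map_nonneg (by simpa [hc.star_eq] using star_left_conjugate_nonneg hy (x⁻¹ʳ - z⁻¹ʳ))
  refine le_antisymm ?_ (conj_nonneg z hz.1.nonneg)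
  have := conj_nonneg x hx.1.nonneg
  rw [hcx] at this
  rw [hcz]
  linear_combination this

theorem apply_star_sub_mul_sub_eq_zero_of_mem_minimizerSet (hx : x ∈ minimizerSet ν ρ)
    (hz : z ∈ minimizerSet ν ρ) : ν (star (z - x) * (z - x)) = 0 := by
  have hzero := apply_conj_sub_eq_zero_of_mem_minimizerSet hx hz
  set p := x⁻¹ʳ
  set q := z⁻¹ʳ
  have hc : IsSelfAdjoint (p - q) :=
    (isStrictlyPositive_ringInverse_iff.mpr hx.1).isSelfAdjoint.sub
      (isStrictlyPositive_ringInverse_iff.mpr hz.1).isSelfAdjoint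
  obtain ⟨w, hw⟩ := CStarAlgebra.nonneg_iff_eq_star_mul_self.mp hz.1.nonneg
  have hker : ρ (star (w * (p - q)) * (w * (p - q))) = 0 := by
    rw [← hzero, star_mul, hc.star_eq, hw]
    noncomm_ring
  have hpd : p * (z - x) = (p - q) * z := by
    rw [mul_sub, sub_mul, Ring.inverse_mul_cancel _ hx.1.isUnit,
      Ring.inverse_mul_cancel _ hz.1.isUnit]
  have hdp : (z - x) * p = z * (p - q) := by
    rw [mul_sub, sub_mul, Ring.mul_inverse_cancel _ hx.1.isUnit,
      Ring.mul_inverse_cancel _ hz.1.isUnit]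
  have hd : star (z - x) = z - x := (hz.1.isSelfAdjoint.sub hx.1.isSelfAdjoint).star_eq
  have hfactor : p * (star (z - x) * (z - x)) * p = ((p - q) * z * star w) * (w * (p - q)) := by
    rw [hd, show p * ((z - x) * (z - x)) * p = (p * (z - x)) * ((z - x) * p) by noncomm_ring,
      hpd, hdp]
    nth_rewrite 2 [hw]
    noncomm_ring
  rw [apply_eq_apply_conj_of_mem_minimizerSet hx, hfactor]
  exact ρ.apply_mul_eq_zero_of_apply_star_mul_self_eq_zero hker _

theorem mem_minimizerSet_iff (hx : x ∈ minimizerSet ν ρ) (hz : IsStrictlyPositive z) :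
    z ∈ minimizerSet ν ρ ↔ ν (star (z - x) * (z - x)) = 0 := by
  refine ⟨apply_star_sub_mul_sub_eq_zero_of_mem_minimizerSet hx, fun hk => ⟨hz, ?_⟩⟩
  have h := minObjective_add_eq_of_mem_minimizerSet hx hk (by rwa [add_sub_cancel])
  rw [add_sub_cancel] at h
  exact isMinOn_iff.mpr fun u hu => h ▸ isMinOn_iff.mp hx.2 u hu

theorem minimizerSet_eq_translate_kernel (hx : x ∈ minimizerSet ν ρ) :
    minimizerSet ν ρ =
      {z | ∃ k, ν (star k * k) = 0 ∧ z = x + k} ∩ {z | IsStrictlyPositive z} := by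
  ext z
  constructor
  · intro hz
    exact ⟨⟨z - x, (mem_minimizerSet_iff hx hz.1).mp hz, (add_sub_cancel x z).symm⟩, hz.1⟩
  · rintro ⟨⟨k, hk, rfl⟩, hz⟩
    exact (mem_minimizerSet_iff hx hz).mpr (by rwa [add_sub_cancel_left])

end CStarAlgebra

/-- If `x ∈ Min_M(ν,ρ)`, then
`Min_M(ν,ρ) = { x + k : k ∈ I_ν } ∩ { positive invertible elements }`, where
`I_ν = { k : ν(k*k) = 0 }` is the left kernel ideal of `ν`. -/
theorem minSet_eq_translate_kernel
    (ν ρ : M →L[ℂ] ℂ) (hν : IsPosForm ν) (hρ : IsPosForm ρ)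
    (x : M) (hx : x ∈ MinSet ν ρ) :
    MinSet ν ρ =
      {z : M | ∃ k : M, ν (star k * k) = 0 ∧ z = x + k} ∩
      {z : M | (∃ w : M, z = star w * w) ∧ IsUnit z} := by
  -- the C⋆-algebra order of `M`, not the one inherited from `H →L[ℂ] H`
  let _ : PartialOrder M := CStarAlgebra.spectralOrder M
  have _ : StarOrderedRing M := CStarAlgebra.spectralOrderedRing M
  let ν' := PositiveLinearMap.ofNonnegStarMulSelf (ν : M →ₗ[ℂ] ℂ) hν
  let ρ' := PositiveLinearMap.ofNonnegStarMulSelf (ρ : M →ₗ[ℂ] ℂ) hρ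
  have hMin : MinSet ν ρ = minimizerSet ν' ρ' := setOf_minObjective_eq_sInf (ν := ν') (ρ := ρ')
  rw [hMin] at hx ⊢
  rw [minimizerSet_eq_translate_kernel hx]
  congr 1
  ext z
  exact isStrictlyPositive_iff_exists_eq_star_mul_self
end
end

section
/- Let M be a von Neumann algebra and let ν, ρ be positive linear forms on M. Let R be a commutative weak-*-closed unital *-subalgebra of M containing the unit of M, and let a ∈ R with a ≥ 0 be such that ρ(y) = ν(a y a) for all y ∈ R. Assume R is minimizing for {ν, ρ}, i.e. inf { (1/2)·( ν(x) + ρ(x⁻¹) ) : x ∈ R positive and invertible in R } = inf { (1/2)·( ν(x) + ρ(x⁻¹) ) : x ∈ M positive and invertible in M }. Then for every orthoprojection p ∈ M (p = p* = p²) with ρ(1−p) = 0 one has ν(p a p) − ν((1−p) a (1−p)) = ν(a). -/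
/-!
For positive `x ∈ R` invertible in `R`, positivity of `(x - a) x⁻¹ (x - a)` gives
`ν x + ν (a x⁻¹ a) ≥ 2 ν a`, and `ρ x⁻¹ = ν (a x⁻¹ a)`; by minimality, `ν X + ρ X⁻¹ ≥ 2 ν a`
for every positive invertible `X ∈ M`. With `q = 1 - p` in the left kernel of `ρ`, take
`X = (1 + t q) (a + ε) (1 + t q)`: then `ρ X⁻¹ = ρ (a + ε)⁻¹`, and the inequality becomes
`0 ≤ t Re ν (q a + a q) + t² Re ν (q a q) + O(ε)`. Letting `ε → 0`, the linear coefficient of a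
quadratic that is nonnegative near `t = 0` vanishes, so `Re ν (q a + a q) = 0`; the imaginary part
vanishes because `q a + a q` is self-adjoint, and `p a p - q a q = a - (q a + a q)`.
-/

open scoped ComplexOrder

noncomputable section

variable {H : Type*} [NormedAddCommGroup H] [InnerProductSpace ℂ H] [CompleteSpace H]

variable {M : VonNeumannAlgebra H}

open Filter Topology

lemma nonneg_of_forall_pos_nonneg_add_mul {B D : ℝ} (h : ∀ ε > 0, 0 ≤ B + ε * D) : 0 ≤ B := by
  have hlim : Tendsto (fun ε => B + ε * D) (𝓝[>] 0) (𝓝 B) := by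
    have : Continuous (fun ε : ℝ => B + ε * D) := by fun_prop
    simpa using (this.tendsto 0).mono_left nhdsWithin_le_nhds
  exact ge_of_tendsto hlim (eventually_nhdsWithin_of_forall h)

lemma eq_zero_of_eventually_nonneg_mul_add_sq_mul {G K : ℝ}
    (h : ∀ᶠ t in 𝓝 0, 0 ≤ t * G + t ^ 2 * K) : G = 0 := by
  have hmin : IsLocalMin (fun t : ℝ => t * G + t ^ 2 * K) 0 := by
    filter_upwards [h] with t ht
    simpa using ht
  have hderiv : HasDerivAt (fun t : ℝ => t * G + t ^ 2 * K) G 0 := by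
    simpa using ((hasDerivAt_id' (0 : ℝ)).mul_const G).fun_add
      ((hasDerivAt_pow 2 (0 : ℝ)).mul_const K)
  exact hmin.hasDerivAt_eq_zero hderiv

lemma exists_eq_star_mul_self_of_mul_eq_one {A : Type*} [Ring A] [StarRing A] {x xi : A}
    (hx : ∃ w, x = star w * w) (h₁ : x * xi = 1) (h₂ : xi * x = 1) : ∃ u, xi = star u * u := by
  obtain ⟨w, rfl⟩ := hx
  have hxi : star xi = xi := by
    have h : star xi * (star w * w) = 1 := by simpa [mul_assoc] using congrArg star h₁
    calc star xi = star xi * (star w * w) * xi := by rw [mul_assoc, h₁, mul_one]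
      _ = xi := by rw [h, one_mul]
  refine ⟨w * xi, ?_⟩
  calc xi = xi * (star w * w) * xi := by rw [h₂, one_mul]
    _ = star (w * xi) * (w * xi) := by rw [star_mul, hxi]; noncomm_ring

lemma Ring.inverse_mul_mul_of_isUnit {M₀ : Type*} [MonoidWithZero M₀] {x y : M₀}
    (hx : IsUnit x) (hy : IsUnit y) :
    Ring.inverse (y * x * y) = Ring.inverse y * Ring.inverse x * Ring.inverse y := by
  obtain ⟨u, rfl⟩ := hx
  obtain ⟨v, rfl⟩ := hy
  simp only [← Units.val_mul, Ring.inverse_unit, mul_inv_rev, mul_assoc]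

section Idempotent

variable {A : Type*} [Ring A] [Algebra ℝ A] {q : A}

lemma IsIdempotentElem.one_add_smul_mul_one_add_smul (hq : IsIdempotentElem q) (s t : ℝ) :
    (1 + s • q) * (1 + t • q) = 1 + (s + t + s * t) • q := by
  simp only [add_mul, mul_add, one_mul, mul_one, smul_mul_smul_comm, hq.eq, add_smul]
  abel

lemma one_add_smul_mul_mul_one_add_smul (x : A) (t : ℝ) :
    (1 + t • q) * x * (1 + t • q) = x + t • (q * x + x * q) + t ^ 2 • (q * x * q) := by
  simp only [add_mul, mul_add, one_mul, mul_one, smul_mul_assoc, mul_smul_comm, smul_add, smul_smul,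
    sq]
  abel

end Idempotent

lemma re_map_star_mul_self_nonneg {A F : Type*} [Mul A] [Star A] [FunLike F A ℂ] {f : F}
    (hf : ∀ x : A, 0 ≤ f (star x * x)) (x : A) : 0 ≤ (f (star x * x)).re :=
  (Complex.le_def.mp (hf x)).1

section PositiveForm

open scoped ComplexStarModule

variable {A F : Type*} [Ring A] [StarRing A] [Algebra ℂ A]
  [FunLike F A ℂ] [LinearMapClass F ℂ A ℂ] {f g : F}

lemma im_map_eq_zero_of_isSelfAdjoint (hf : ∀ x : A, 0 ≤ f (star x * x)) {h : A}
    (hh : IsSelfAdjoint h) : (f h).im = 0 := by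
  have him (x : A) : (f (star x * x)).im = 0 := (Complex.le_def.mp (hf x)).2.symm
  have hsq : star (1 + h) * (1 + h) = star 1 * 1 + (2 : ℂ) • h + star h * h := by
    simp only [star_add, star_one, hh.star_eq, two_smul]; noncomm_ring
  have := him (1 + h)
  rw [hsq, map_add, map_add, map_smul, Complex.add_im, Complex.add_im, him, him] at this
  simpa using this

/-- The expansion of `f ((x - a) * xi * (x - a)) ≥ 0`. -/
lemma two_mul_re_le_re_map_add_re_map_mul_mul (hf : ∀ x : A, 0 ≤ f (star x * x)) {a x xi : A}
    (ha : IsSelfAdjoint a) (hx : ∃ w, x = star w * w) (h₁ : x * xi = 1) (h₂ : xi * x = 1) :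
    2 * (f a).re ≤ (f x).re + (f (a * xi * a)).re := by
  obtain ⟨u, hu⟩ := exists_eq_star_mul_self_of_mul_eq_one hx h₁ h₂
  have hxa : IsSelfAdjoint (x - a) := by
    obtain ⟨w, rfl⟩ := hx
    exact (IsSelfAdjoint.star_mul_self w).sub ha
  have hsq : (x - a) * xi * (x - a) = star (u * (x - a)) * (u * (x - a)) := by
    rw [hu, star_mul u, hxa.star_eq]; noncomm_ring
  have hexp : (x - a) * xi * (x - a) = x - a - a + a * xi * a := by
    rw [show (x - a) * xi * (x - a) = x * xi * x - x * xi * a - a * (xi * x) + a * xi * a by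
      noncomm_ring, h₁, h₂, one_mul, one_mul, mul_one]
  have h := re_map_star_mul_self_nonneg hf (u * (x - a))
  rw [← hsq, hexp, map_add, map_sub, map_sub] at h
  simp only [Complex.add_re, Complex.sub_re] at h
  linarith

variable [StarModule ℂ A]

lemma map_star_of_star_mul_self_nonneg (hf : ∀ x : A, 0 ≤ f (star x * x)) (z : A) :
    f (star z) = star (f z) := by
  have hsa {h : A} (hh : IsSelfAdjoint h) : star (f h) = f h :=
    Complex.conj_eq_iff_im.mpr (im_map_eq_zero_of_isSelfAdjoint hf hh)
  rw [← realPart_add_I_smul_imaginaryPart z]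
  simp [hsa (ℜ z).2, hsa (ℑ z).2, (ℜ z).2.star_eq, (ℑ z).2.star_eq]

/-- Cauchy–Schwarz for the positive semidefinite sesquilinear form `(x, y) ↦ f (star x * y)`. -/
lemma norm_map_star_mul_sq_le (hf : ∀ x : A, 0 ≤ f (star x * x)) (x y : A) :
    ‖f (star x * y)‖ ^ 2 ≤ (f (star x * x)).re * (f (star y * y)).re := by
  let _ : PreInnerProductSpace.Core ℂ A :=
    { inner x y := f (star x * y)
      conj_inner_symm x y := by
        rw [← Complex.star_def, ← map_star_of_star_mul_self_nonneg hf, star_mul, star_star]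
      re_inner_nonneg x := re_map_star_mul_self_nonneg hf x
      add_left x y z := by simp [add_mul]
      smul_left x y r := by simp }
  have hyx : ‖f (star y * x)‖ = ‖f (star x * y)‖ := by
    rw [← norm_star, ← map_star_of_star_mul_self_nonneg hf, star_mul, star_star]
  rw [sq]
  exact hyx ▸ InnerProductSpace.Core.inner_mul_inner_self_le (𝕜 := ℂ) x y

lemma map_star_mul_eq_zero_of_map_star_mul_self_eq_zero (hf : ∀ x : A, 0 ≤ f (star x * x))
    {k : A} (hk : f (star k * k) = 0) (z : A) : f (star k * z) = 0 := by
  have h := norm_map_star_mul_sq_le hf k z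
  rw [hk, Complex.zero_re, zero_mul] at h
  exact norm_eq_zero.mp (pow_eq_zero_iff two_ne_zero |>.mp (le_antisymm h (sq_nonneg _)))

lemma map_star_mul_eq_zero_of_map_star_mul_self_eq_zero' (hf : ∀ x : A, 0 ≤ f (star x * x))
    {k : A} (hk : f (star k * k) = 0) (z : A) : f (star z * k) = 0 := by
  rw [show star z * k = star (star k * z) by rw [star_mul, star_star],
    map_star_of_star_mul_self_nonneg hf, map_star_mul_eq_zero_of_map_star_mul_self_eq_zero hf hk,
    star_zero]

lemma map_mul_eq_zero_of_map_eq_zero (hf : ∀ x : A, 0 ≤ f (star x * x)) {q : A}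
    (hq : IsSelfAdjoint q) (hq₂ : IsIdempotentElem q) (h : f q = 0) (z : A) :
    f (q * z) = 0 ∧ f (z * q) = 0 := by
  have hk : f (star q * q) = 0 := by rw [hq.star_eq, hq₂.eq, h]
  constructor
  · simpa [hq.star_eq] using map_star_mul_eq_zero_of_map_star_mul_self_eq_zero hf hk z
  · simpa using map_star_mul_eq_zero_of_map_star_mul_self_eq_zero' hf hk (star z)

lemma re_map_add_algebraMap_add_re_map_mul_inverse_mul_le (hf : ∀ x : A, 0 ≤ f (star x * x))
    {a : A} (ha : ∃ w, a = star w * w) {ε : ℝ} (hε : 0 ≤ ε) (hu : IsUnit (a + algebraMap ℝ A ε)) :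
    (f (a + algebraMap ℝ A ε)).re + (f (a * Ring.inverse (a + algebraMap ℝ A ε) * a)).re ≤
      2 * (f a).re + ε * (f 1).re := by
  obtain ⟨w, hw⟩ := ha
  set x := a + algebraMap ℝ A ε
  set xi := Ring.inverse x
  have ha_sa : IsSelfAdjoint a := hw ▸ .star_mul_self w
  have hxi : star xi = xi := (ha_sa.add (.algebraMap A (.all ε))).ringInverse.star_eq
  have hright : a * xi = 1 - ε • xi := by
    rw [← Ring.mul_inverse_cancel x hu, add_mul, Algebra.algebraMap_eq_smul_one, smul_one_mul]
    abel
  have hleft : xi * a = 1 - ε • xi := by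
    rw [← Ring.inverse_mul_cancel x hu, mul_add, Algebra.algebraMap_eq_smul_one, mul_smul_one]
    abel
  have hpos : a * xi = star (a * xi) * (a * xi) + ε • (star (w * xi) * (w * xi)) := by
    calc a * xi = xi * a * (x * xi) := by
          rw [Ring.mul_inverse_cancel x hu, mul_one, hleft, hright]
      _ = xi * a * (a * xi) + ε • (xi * a * xi) := by
          simp only [x, add_mul, mul_add, Algebra.algebraMap_eq_smul_one, smul_one_mul,
            mul_smul_comm, mul_assoc]
      _ = _ := by rw [star_mul, star_mul, hxi, ha_sa.star_eq, hw]; noncomm_ring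
  have hnonneg : 0 ≤ (f (a * xi)).re := by
    rw [hpos, map_add, LinearMapClass.map_smul_of_tower, Complex.add_re, Complex.smul_re,
      smul_eq_mul]
    exact add_nonneg (re_map_star_mul_self_nonneg hf _)
      (mul_nonneg hε (re_map_star_mul_self_nonneg hf _))
  have hconj : a * xi * a = a - ε • (a * xi) := by
    rw [mul_assoc, hleft, mul_sub, mul_one, mul_smul_comm]
  rw [hconj, map_sub, LinearMapClass.map_smul_of_tower, map_add, Algebra.algebraMap_eq_smul_one,
    LinearMapClass.map_smul_of_tower]
  simp only [Complex.add_re, Complex.sub_re, Complex.smul_re, smul_eq_mul]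
  linarith [mul_nonneg hε hnonneg]

/-- Conjugating by the invertible `1 + t • q` leaves `g (x⁻¹)` unchanged, since `g` annihilates
`q` from both sides. -/
lemma two_mul_re_le_of_forall_two_mul_re_le {a q x : A}
    (hlow : ∀ X : A, (∃ u, X = star u * u) → IsUnit X →
      2 * (f a).re ≤ (f X).re + (g (Ring.inverse X)).re)
    (hq : IsSelfAdjoint q) (hq₂ : IsIdempotentElem q)
    (hgl : ∀ z, g (q * z) = 0) (hgr : ∀ z, g (z * q) = 0)
    (hx : ∃ v, x = star v * v) (hu : IsUnit x) {t : ℝ} (ht : t ≠ -1) :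
    2 * (f a).re ≤ (f x).re + t * (f (q * x + x * q)).re + t ^ 2 * (f (q * x * q)).re +
      (g (Ring.inverse x)).re := by
  have hst : -t / (1 + t) + t + -t / (1 + t) * t = 0 := by
    have : 1 + t ≠ 0 := fun h => ht (by linarith)
    field_simp; ring
  have hy₁ : (1 + t • q) * (1 + (-t / (1 + t)) • q) = 1 := by
    rw [hq₂.one_add_smul_mul_one_add_smul, show t + -t / (1 + t) + t * (-t / (1 + t)) = 0 by
      linear_combination hst, zero_smul, add_zero]
  have hy₂ : (1 + (-t / (1 + t)) • q) * (1 + t • q) = 1 := by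
    rw [hq₂.one_add_smul_mul_one_add_smul, hst, zero_smul, add_zero]
  have hyu : IsUnit (1 + t • q) := ⟨⟨_, _, hy₁, hy₂⟩, rfl⟩
  have hyinv : Ring.inverse (1 + t • q) = 1 + (-t / (1 + t)) • q :=
    Ring.inverse_unit ⟨_, _, hy₁, hy₂⟩
  have hy_sa : IsSelfAdjoint (1 + t • q) :=
    (IsSelfAdjoint.one A).add ((IsSelfAdjoint.all t).smul hq)
  have hXpos : ∃ u, (1 + t • q) * x * (1 + t • q) = star u * u := by
    obtain ⟨v, rfl⟩ := hx
    exact ⟨v * (1 + t • q), by rw [star_mul, hy_sa.star_eq]; simp only [mul_assoc]⟩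
  have h := hlow _ hXpos ((hyu.mul hu).mul hyu)
  rw [Ring.inverse_mul_mul_of_isUnit hu hyu, hyinv] at h
  simpa only [one_add_smul_mul_mul_one_add_smul, map_add, LinearMapClass.map_smul_of_tower (S := ℂ),
    hgl, hgr, smul_zero, add_zero, Complex.add_re, Complex.smul_re, smul_eq_mul] using h

end PositiveForm

lemma CStarAlgebra.exists_star_mul_self_and_isUnit_add_algebraMap {A : Type*} [CStarAlgebra A]
    {a : A} (ha : ∃ w, a = star w * w) {ε : ℝ} (hε : 0 < ε) :
    (∃ v, a + algebraMap ℝ A ε = star v * v) ∧ IsUnit (a + algebraMap ℝ A ε) := by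
  let _ := CStarAlgebra.spectralOrder A
  have _ := CStarAlgebra.spectralOrderedRing A
  obtain ⟨w, rfl⟩ := ha
  have h : IsStrictlyPositive (star w * w + algebraMap ℝ A ε) :=
    (isStrictlyPositive_algebraMap hε).nonneg_add (star_mul_self_nonneg w)
  exact ⟨CStarAlgebra.nonneg_iff_eq_star_mul_self.mp h.nonneg, h.isUnit⟩

lemma nonneg_of_forall_two_mul_re_le {A F : Type*} [CStarAlgebra A] [FunLike F A ℂ]
    [LinearMapClass F ℂ A ℂ] {f g : F} (hf : ∀ x : A, 0 ≤ f (star x * x)) {a q : A}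
    (ha : ∃ w, a = star w * w)
    (hlow : ∀ X : A, (∃ u, X = star u * u) → IsUnit X →
      2 * (f a).re ≤ (f X).re + (g (Ring.inverse X)).re)
    (hg : ∀ x : A, 0 ≤ g (star x * x)) (hq : IsSelfAdjoint q) (hq₂ : IsIdempotentElem q)
    (hgq : g q = 0) {ε : ℝ} (hε : 0 < ε)
    (hinv : g (Ring.inverse (a + algebraMap ℝ A ε)) =
      f (a * Ring.inverse (a + algebraMap ℝ A ε) * a))
    {t : ℝ} (ht : t ≠ -1) :
    0 ≤ t * (f (q * a + a * q)).re + t ^ 2 * (f (q * a * q)).re +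
      ε * ((f 1).re + (2 * t + t ^ 2) * (f q).re) := by
  obtain ⟨hpos, hu⟩ := CStarAlgebra.exists_star_mul_self_and_isUnit_add_algebraMap ha hε
  have h₁ := two_mul_re_le_of_forall_two_mul_re_le hlow hq hq₂
    (map_mul_eq_zero_of_map_eq_zero hg hq hq₂ hgq · |>.1)
    (map_mul_eq_zero_of_map_eq_zero hg hq hq₂ hgq · |>.2) hpos hu ht
  have h₂ := re_map_add_algebraMap_add_re_map_mul_inverse_mul_le hf ha hε.le hu
  have e₁ : q * (a + algebraMap ℝ A ε) + (a + algebraMap ℝ A ε) * q =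
      q * a + a * q + (2 * ε) • q := by
    rw [Algebra.algebraMap_eq_smul_one, mul_add, add_mul, mul_smul_one, smul_one_mul, two_mul,
      add_smul]
    abel
  have e₂ : q * (a + algebraMap ℝ A ε) * q = q * a * q + ε • q := by
    rw [Algebra.algebraMap_eq_smul_one, mul_add, add_mul, mul_smul_one, smul_mul_assoc, hq₂.eq]
  rw [hinv, e₁, e₂] at h₁
  simp only [map_add, LinearMapClass.map_smul_of_tower (S := ℂ), Algebra.algebraMap_eq_smul_one,
    Complex.add_re, Complex.smul_re, smul_eq_mul] at h₁ h₂ ⊢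
  linarith

lemma VonNeumannAlgebra.coe_ringInverse_mem {R : VonNeumannAlgebra H} {x : M}
    (hx : (x : H →L[ℂ] H) ∈ R) : ((Ring.inverse x : M) : H →L[ℂ] H) ∈ R := by
  by_cases hu : IsUnit x
  · have h₁ : (x : H →L[ℂ] H) * (Ring.inverse x : M) = 1 := by
      rw [← MulMemClass.coe_mul, Ring.mul_inverse_cancel x hu, OneMemClass.coe_one]
    have h₂ : ((Ring.inverse x : M) : H →L[ℂ] H) * x = 1 := by
      rw [← MulMemClass.coe_mul, Ring.inverse_mul_cancel x hu, OneMemClass.coe_one]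
    have _ : IsClosed (R.toStarSubalgebra : Set (H →L[ℂ] H)) := R.instIsClosed
    have hR : IsUnit (⟨x, hx⟩ : R.toStarSubalgebra) :=
      R.toStarSubalgebra.coe_isUnit.mp ⟨⟨_, _, h₁, h₂⟩, rfl⟩
    have h₃ : (x : H →L[ℂ] H) * ((hR.unit⁻¹ : (R.toStarSubalgebra)ˣ) : R.toStarSubalgebra) = 1 :=
      congrArg Subtype.val hR.mul_val_inv
    rw [left_inv_eq_right_inv h₂ h₃]
    exact SetLike.coe_mem _
  · rw [Ring.inverse_non_unit x hu, ZeroMemClass.coe_zero]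
    exact zero_mem R

/-- `sInf (meanValues ν ρ)` is `√P_M(ν, ρ)`. -/
def meanValues (ν ρ : M →L[ℂ] ℂ) : Set ℝ :=
  {r : ℝ | ∃ x : M, (∃ w : M, x = star w * w) ∧ IsUnit x ∧
    r = (1/2) * ((ν x).re + (ρ (Ring.inverse x)).re)}

/-- `sInf (meanValuesIn R ν ρ)` is `√P_R(ν|_R, ρ|_R)`. -/
def meanValuesIn (R : VonNeumannAlgebra H) (ν ρ : M →L[ℂ] ℂ) : Set ℝ :=
  {r : ℝ | ∃ x : M, (x : H →L[ℂ] H) ∈ R ∧ (∃ w : M, x = star w * w) ∧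
    ∃ xi : M, (xi : H →L[ℂ] H) ∈ R ∧ x * xi = 1 ∧ xi * x = 1 ∧
      r = (1/2) * ((ν x).re + (ρ xi).re)}

lemma bddBelow_meanValues {ν ρ : M →L[ℂ] ℂ} (hν : IsPosForm ν) (hρ : IsPosForm ρ) :
    BddBelow (meanValues ν ρ) := by
  refine ⟨0, ?_⟩
  rintro _ ⟨x, ⟨w, rfl⟩, hu, rfl⟩
  obtain ⟨u, hu⟩ := exists_eq_star_mul_self_of_mul_eq_one ⟨w, rfl⟩
    (Ring.mul_inverse_cancel _ hu) (Ring.inverse_mul_cancel _ hu)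
  rw [hu]
  have := re_map_star_mul_self_nonneg hν w
  have := re_map_star_mul_self_nonneg hρ u
  positivity

lemma re_le_of_mem_meanValuesIn {ν ρ : M →L[ℂ] ℂ} (hν : IsPosForm ν) {R : VonNeumannAlgebra H}
    {a : M} (ha : IsSelfAdjoint a) (hrad : ∀ y : M, (y : H →L[ℂ] H) ∈ R → ρ y = ν (a * y * a))
    {r : ℝ} (hr : r ∈ meanValuesIn R ν ρ) : (ν a).re ≤ r := by
  obtain ⟨x, -, hx, xi, hxi, h₁, h₂, rfl⟩ := hr
  have := two_mul_re_le_re_map_add_re_map_mul_mul hν ha hx h₁ h₂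
  rw [hrad xi hxi]
  linarith

lemma two_mul_re_le_of_sInf_meanValuesIn_eq {ν ρ : M →L[ℂ] ℂ} (hν : IsPosForm ν)
    (hρ : IsPosForm ρ) {R : VonNeumannAlgebra H} {a : M} (ha : IsSelfAdjoint a)
    (hrad : ∀ y : M, (y : H →L[ℂ] H) ∈ R → ρ y = ν (a * y * a))
    (hmin : sInf (meanValuesIn R ν ρ) = sInf (meanValues ν ρ))
    (X : M) (hX : ∃ u, X = star u * u) (hu : IsUnit X) :
    2 * (ν a).re ≤ (ν X).re + (ρ (Ring.inverse X)).re := by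
  have hne : (meanValuesIn R ν ρ).Nonempty :=
    ⟨_, 1, one_mem R, ⟨1, by simp⟩, 1, one_mem R, mul_one 1, mul_one 1, rfl⟩
  have := calc (ν a).re ≤ sInf (meanValuesIn R ν ρ) :=
        le_csInf hne fun _ => re_le_of_mem_meanValuesIn hν ha hrad
    _ = sInf (meanValues ν ρ) := hmin
    _ ≤ _ := csInf_le (bddBelow_meanValues hν hρ) ⟨X, hX, hu, rfl⟩
  linarith

theorem minimizing_subalgebra_projection_identity_general
    (ν ρ : M →L[ℂ] ℂ) (hν : IsPosForm ν) (hρ : IsPosForm ρ)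
    (R : VonNeumannAlgebra H)
    (a : M) (haR : (a : H →L[ℂ] H) ∈ R) (ha : ∃ w : M, a = star w * w)
    (hrad : ∀ y : M, (y : H →L[ℂ] H) ∈ R → ρ y = ν (a * y * a))
    (hmin :
      sInf {r : ℝ | ∃ x : M, (x : H →L[ℂ] H) ∈ R ∧ (∃ w : M, x = star w * w) ∧
          ∃ xi : M, (xi : H →L[ℂ] H) ∈ R ∧ x * xi = 1 ∧ xi * x = 1 ∧
            r = (1/2) * ((ν x).re + (ρ xi).re)} =
      sInf {r : ℝ | ∃ x : M, (∃ w : M, x = star w * w) ∧ IsUnit x ∧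
          r = (1/2) * ((ν x).re + (ρ (Ring.inverse x)).re)}) :
    ∀ p : M, IsSelfAdjoint p → p * p = p → ρ (1 - p) = 0 →
      ν (p * a * p) - ν ((1 - p) * a * (1 - p)) = ν a := by
  intro p hp hpp hρp
  set q := 1 - p
  have hq : IsSelfAdjoint q := (IsSelfAdjoint.one M).sub hp
  have hq₂ : IsIdempotentElem q := IsIdempotentElem.one_sub hpp
  have ha_sa : IsSelfAdjoint a := by obtain ⟨w, rfl⟩ := ha; exact .star_mul_self w
  have hlow := two_mul_re_le_of_sInf_meanValuesIn_eq hν hρ ha_sa hrad hmin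
  have hquad (t : ℝ) (ht : -1 < t) :
      0 ≤ t * (ν (q * a + a * q)).re + t ^ 2 * (ν (q * a * q)).re := by
    refine nonneg_of_forall_pos_nonneg_add_mul (D := (ν 1).re + (2 * t + t ^ 2) * (ν q).re)
      fun ε hε => ?_
    have hxR : ((a + algebraMap ℝ M ε : M) : H →L[ℂ] H) ∈ R :=
      add_mem haR (R.algebraMap_mem (ε : ℂ))
    exact nonneg_of_forall_two_mul_re_le hν ha hlow hρ hq hq₂ hρp hε
      (hrad _ (VonNeumannAlgebra.coe_ringInverse_mem hxR)) ht.ne'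
  have hre : (ν (q * a + a * q)).re = 0 := eq_zero_of_eventually_nonneg_mul_add_sq_mul <|
    eventually_of_mem (Ioi_mem_nhds (by norm_num : (-1 : ℝ) < 0)) hquad
  have him : (ν (q * a + a * q)).im = 0 := im_map_eq_zero_of_isSelfAdjoint hν <| by
    rw [isSelfAdjoint_iff, star_add, star_mul, star_mul, hq.star_eq, ha_sa.star_eq, add_comm]
  have hsplit : p * a * p - q * a * q = a - (q * a + a * q) := by simp only [q]; noncomm_ring
  calc ν (p * a * p) - ν ((1 - p) * a * (1 - p)) = ν a - ν (q * a + a * q) := by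
        rw [← map_sub ν, ← map_sub ν, hsplit]
    _ = ν a := by rw [show ν (q * a + a * q) = 0 from Complex.ext hre him, sub_zero]

/-- Let `R` be a commutative von Neumann subalgebra of `M` (with the same
unit), let `a ∈ R` be positive with `ρ(y) = ν(a y a)` for all `y ∈ R`, and suppose `R` is
minimizing for `{ν,ρ}` (the infimum of `(1/2)(ν(x)+ρ(x⁻¹))` over positive elements of `R`
invertible in `R` equals the corresponding infimum over positive invertible elements of `M`).
Then for every orthoprojection `p ∈ M` with `ρ(1−p) = 0` one has
`ν(p a p) − ν((1−p) a (1−p)) = ν(a)`. -/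
theorem minimizing_subalgebra_projection_identity
    (ν ρ : M →L[ℂ] ℂ) (hν : IsPosForm ν) (hρ : IsPosForm ρ)
    (R : VonNeumannAlgebra H) (hRM : ∀ x : H →L[ℂ] H, x ∈ R → x ∈ M)
    (hcomm : ∀ x y : H →L[ℂ] H, x ∈ R → y ∈ R → x * y = y * x)
    (a : M) (haR : (a : H →L[ℂ] H) ∈ R) (ha : ∃ w : M, a = star w * w)
    (hrad : ∀ y : M, (y : H →L[ℂ] H) ∈ R → ρ y = ν (a * y * a))
    (hmin :
      sInf {r : ℝ | ∃ x : M, (x : H →L[ℂ] H) ∈ R ∧ (∃ w : M, x = star w * w) ∧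
          ∃ xi : M, (xi : H →L[ℂ] H) ∈ R ∧ x * xi = 1 ∧ xi * x = 1 ∧
            r = (1/2) * ((ν x).re + (ρ xi).re)} =
      sInf {r : ℝ | ∃ x : M, (∃ w : M, x = star w * w) ∧ IsUnit x ∧
          r = (1/2) * ((ν x).re + (ρ (Ring.inverse x)).re)}) :
    ∀ p : M, IsSelfAdjoint p → p * p = p → ρ (1 - p) = 0 →
      ν (p * a * p) - ν ((1 - p) * a * (1 - p)) = ν a :=
  minimizing_subalgebra_projection_identity_general ν ρ hν hρ R a haR ha hrad hmin
end
end
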